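/- Let L > 0 and let x ∈ X_L be a regular opinion function. Then the one-step update operator U of the continuous-agent Krause model is continuous at x with respect to the supremum norm: for every ε > 0 there exists δ > 0 such that for every y ∈ X_L with sup_α |y(α) − x(α)| ≤ δ, one has sup_α |(U(y))(α) − (U(x))(α)| ≤ ε. -/

import Mathlib

open MeasureTheory

/-- The one-step update operator `U` of the continuous-agent Krause model. -/
noncomputable def Uop (x : ℝ → ℝ) : ℝ → ℝ := fun α =>
  if volume {β ∈ Set.Icc (0 : ℝ) 1 | |x α - x β| < 1} = 0 then x α
  else (∫ β in {β ∈ Set.Icc (0 : ℝ) 1 | |x α - x β| < 1}, x β) /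
    (volume {β ∈ Set.Icc (0 : ℝ) 1 | |x α - x β| < 1}).toReal

/-- A regular opinion function: the density of agents on every subinterval of
`[inf x, sup x]` (extrema over `[0,1]`) is bounded above and below by positive
constants `M ≥ m > 0`. -/
def RegularOpinion (x : ℝ → ℝ) : Prop :=
  ∃ m M : ℝ, 0 < m ∧ m ≤ M ∧ ∀ a b : ℝ,
    sInf (x '' Set.Icc (0 : ℝ) 1) ≤ a → a ≤ b →
    b ≤ sSup (x '' Set.Icc (0 : ℝ) 1) →
    m * (b - a) ≤ (volume {α ∈ Set.Icc (0 : ℝ) 1 | x α ∈ Set.Icc a b}).toReal ∧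
    (volume {α ∈ Set.Icc (0 : ℝ) 1 | x α ∈ Set.Icc a b}).toReal ≤ M * (b - a)

/-!
If `|y - x| ≤ δ` on `[0,1]`, the confidence set of `y` at `α` lies between the confidence sets
of `x` at `α` with radii `1 - 2δ` and `1 + 2δ`. The upper regularity bound makes the mass of
`x` in the two shells between these radii `O(δ)`, so the numerators and denominators of
`U(y)(α)` and `U(x)(α)` differ by `O(δ)`; the lower regularity bound keeps the denominators
away from `0` uniformly in `α`.
-/

open Set

lemma apply_mem_Icc_csInf_csSup {x : ℝ → ℝ} {s : Set ℝ} {α : ℝ} (hlo : BddBelow (x '' s))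
    (hhi : BddAbove (x '' s)) (hα : α ∈ s) : x α ∈ Icc (sInf (x '' s)) (sSup (x '' s)) :=
  ⟨csInf_le hlo (mem_image_of_mem x hα), le_csSup hhi (mem_image_of_mem x hα)⟩

def confidenceSet (x : ℝ → ℝ) (t r : ℝ) : Set ℝ := {β ∈ Icc (0 : ℝ) 1 | |t - x β| < r}

section ConfidenceSet

variable {x y : ℝ → ℝ} {s t r r' δ : ℝ}

lemma confidenceSet_subset_Icc : confidenceSet x t r ⊆ Icc 0 1 := fun _ hβ => hβ.1

lemma volume_confidenceSet_ne_top : volume (confidenceSet x t r) ≠ ⊤ :=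
  measure_ne_top_of_subset confidenceSet_subset_Icc measure_Icc_lt_top.ne

lemma measurableSet_confidenceSet (hx : Measurable x) : MeasurableSet (confidenceSet x t r) :=
  measurableSet_Icc.inter (measurableSet_lt (measurable_const.sub hx).abs measurable_const)

lemma confidenceSet_mono (h : r ≤ r') : confidenceSet x t r ⊆ confidenceSet x t r' :=
  fun _ hβ => ⟨hβ.1, hβ.2.trans_le h⟩

lemma confidenceSet_subset_of_abs_sub_le (hst : |s - t| ≤ δ)
    (hxy : ∀ β ∈ Icc (0 : ℝ) 1, |y β - x β| ≤ δ) (hr : r + 2 * δ ≤ r') :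
    confidenceSet x t r ⊆ confidenceSet y s r' := by
  rintro β ⟨hβ, hlt⟩
  have hβxy := hxy β hβ
  rw [abs_le] at hst hβxy
  rw [abs_lt] at hlt
  exact ⟨hβ, abs_lt.2 ⟨by linarith, by linarith⟩⟩

lemma confidenceSet_sdiff_subset (x : ℝ → ℝ) (t r η : ℝ) :
    confidenceSet x t (r + η) \ confidenceSet x t (r - η) ⊆
      {β ∈ Icc (0 : ℝ) 1 | x β ∈ Icc (t - r - η) (t - r + η)} ∪
        {β ∈ Icc (0 : ℝ) 1 | x β ∈ Icc (t + r - η) (t + r + η)} := by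
  rintro β ⟨⟨hβ, hlt⟩, hnot⟩
  have hge : r - η ≤ |t - x β| := not_lt.1 fun h => hnot ⟨hβ, h⟩
  rw [abs_lt] at hlt
  rcases le_abs'.1 hge with h | h
  · exact Or.inr ⟨hβ, by linarith, by linarith⟩
  · exact Or.inl ⟨hβ, by linarith, by linarith⟩

lemma measureReal_confidenceSet_sdiff_le {M η : ℝ}
    (hM : ∀ a b, a ≤ b → volume.real {β ∈ Icc (0 : ℝ) 1 | x β ∈ Icc a b} ≤ M * (b - a))
    (hη : 0 ≤ η) :
    volume.real (confidenceSet x t (r + η) \ confidenceSet x t (r - η)) ≤ 4 * M * η := by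
  calc _ ≤ volume.real ({β ∈ Icc (0 : ℝ) 1 | x β ∈ Icc (t - r - η) (t - r + η)} ∪
          {β ∈ Icc (0 : ℝ) 1 | x β ∈ Icc (t + r - η) (t + r + η)}) :=
        measureReal_mono (confidenceSet_sdiff_subset x t r η)
          (measure_ne_top_of_subset (union_subset (sep_subset _ _) (sep_subset _ _))
            measure_Icc_lt_top.ne)
    _ ≤ M * ((t - r + η) - (t - r - η)) + M * ((t + r + η) - (t + r - η)) :=
        (measureReal_union_le _ _).trans
          (add_le_add (hM _ _ (by linarith)) (hM _ _ (by linarith)))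
    _ = 4 * M * η := by ring

end ConfidenceSet

namespace RegularOpinion

variable {x : ℝ → ℝ}

lemma exists_measureReal_le (hreg : RegularOpinion x) (hlo : BddBelow (x '' Icc 0 1))
    (hhi : BddAbove (x '' Icc 0 1)) :
    ∃ M, 0 ≤ M ∧ ∀ a b, a ≤ b →
      volume.real {β ∈ Icc (0 : ℝ) 1 | x β ∈ Icc a b} ≤ M * (b - a) := by
  obtain ⟨m, M, hm, hmM, hreg⟩ := hreg
  set A := sInf (x '' Icc 0 1)
  set B := sSup (x '' Icc 0 1)
  have hM0 : 0 ≤ M := hm.le.trans hmM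
  refine ⟨M, hM0, fun a b hab => ?_⟩
  have hclip : {β ∈ Icc (0 : ℝ) 1 | x β ∈ Icc a b} =
      {β ∈ Icc (0 : ℝ) 1 | x β ∈ Icc (max a A) (min b B)} := by
    ext β
    simp only [mem_ofPred_eq, mem_Icc, max_le_iff, le_min_iff]
    constructor
    · rintro ⟨hβ, h₁, h₂⟩
      obtain ⟨hAβ, hβB⟩ := apply_mem_Icc_csInf_csSup hlo hhi hβ
      exact ⟨hβ, ⟨h₁, hAβ⟩, h₂, hβB⟩
    · rintro ⟨hβ, ⟨h₁, -⟩, h₂, -⟩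
      exact ⟨hβ, h₁, h₂⟩
  rw [hclip]
  rcases le_or_gt (max a A) (min b B) with h | h
  · calc _ ≤ M * (min b B - max a A) :=
          (hreg _ _ (le_max_right _ _) h (min_le_right _ _)).2
      _ ≤ M * (b - a) :=
          mul_le_mul_of_nonneg_left (sub_le_sub (min_le_left _ _) (le_max_left _ _)) hM0
  · simp only [Icc_eq_empty_of_lt h, mem_empty_iff_false, and_false, ofPred_false,
      measureReal_empty]
    exact mul_nonneg hM0 (sub_nonneg.2 hab)

lemma exists_pos_le_measureReal_confidenceSet (hreg : RegularOpinion x)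
    (hlo : BddBelow (x '' Icc 0 1)) (hhi : BddAbove (x '' Icc 0 1)) {r : ℝ} (hr : 0 < r) :
    ∃ c > 0, ∀ α ∈ Icc (0 : ℝ) 1, c ≤ volume.real (confidenceSet x (x α) r) := by
  obtain ⟨m, M, hm, -, hreg⟩ := hreg
  set A := sInf (x '' Icc 0 1)
  set B := sSup (x '' Icc 0 1)
  refine ⟨min 1 (m * (r / 2)), by positivity, fun α hα => ?_⟩
  obtain ⟨hAα, hαB⟩ := apply_mem_Icc_csInf_csSup hlo hhi hα
  rcases lt_or_ge (B - A) r with hBA | hBA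
  · have hall : confidenceSet x (x α) r = Icc 0 1 := by
      refine subset_antisymm confidenceSet_subset_Icc fun β hβ => ⟨hβ, ?_⟩
      obtain ⟨hAβ, hβB⟩ := apply_mem_Icc_csInf_csSup hlo hhi hβ
      exact abs_lt.2 ⟨by linarith, by linarith⟩
    rw [hall, Real.volume_real_Icc_of_le zero_le_one, sub_zero]
    exact min_le_left _ _
  · have hlen : max A (x α - r / 2) + r / 2 ≤ min B (x α + r / 2) := by
      rw [← max_add_add_right]
      exact le_min (max_le (by linarith) (by linarith)) (max_le (by linarith) (by linarith))
    have hsub : {β ∈ Icc (0 : ℝ) 1 | x β ∈ Icc (max A (x α - r / 2)) (min B (x α + r / 2))} ⊆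
        confidenceSet x (x α) r := by
      rintro β ⟨hβ, haβ, hβb⟩
      have := le_max_right A (x α - r / 2)
      have := min_le_right B (x α + r / 2)
      exact ⟨hβ, abs_lt.2 ⟨by linarith, by linarith⟩⟩
    calc min 1 (m * (r / 2)) ≤ m * (min B (x α + r / 2) - max A (x α - r / 2)) :=
          (min_le_right _ _).trans (by gcongr; linarith)
      _ ≤ volume.real
            {β ∈ Icc (0 : ℝ) 1 | x β ∈ Icc (max A (x α - r / 2)) (min B (x α + r / 2))} :=
          (hreg _ _ (le_max_left _ _) (by linarith) (min_le_left _ _)).1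
      _ ≤ _ := measureReal_mono hsub volume_confidenceSet_ne_top

end RegularOpinion

section Sandwich

variable {X : Type*} [MeasurableSpace X] {μ : Measure X} {s₁ s₂ t u : Set X}

lemma abs_measureReal_sub_measureReal_le_of_subset (ht : MeasurableSet t) (hμu : μ u ≠ ⊤)
    (ht₁ : t ⊆ s₁) (h₁u : s₁ ⊆ u) (ht₂ : t ⊆ s₂) (h₂u : s₂ ⊆ u) :
    |μ.real s₁ - μ.real s₂| ≤ μ.real (u \ t) := by
  rw [measureReal_sdiff (ht₁.trans h₁u) ht hμu, abs_le]
  have := measureReal_mono ht₁ (measure_ne_top_of_subset h₁u hμu)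
  have := measureReal_mono h₁u hμu
  have := measureReal_mono ht₂ (measure_ne_top_of_subset h₂u hμu)
  have := measureReal_mono h₂u hμu
  constructor <;> linarith

lemma abs_setIntegral_sub_setIntegral_le_of_subset {f : X → ℝ} {L : ℝ} (ht : MeasurableSet t)
    (hu : MeasurableSet u) (hμu : μ u ≠ ⊤) (hfu : IntegrableOn f u μ)
    (hf0 : ∀ β ∈ u, 0 ≤ f β) (hfL : ∀ β ∈ u, f β ≤ L)
    (ht₁ : t ⊆ s₁) (h₁u : s₁ ⊆ u) (ht₂ : t ⊆ s₂) (h₂u : s₂ ⊆ u) :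
    |(∫ β in s₁, f β ∂μ) - ∫ β in s₂, f β ∂μ| ≤ L * μ.real (u \ t) := by
  have hf0u : 0 ≤ᵐ[μ.restrict u] f := ae_restrict_of_forall_mem hu hf0
  have hmono : ∀ {v w : Set X}, v ⊆ w → w ⊆ u → ∫ β in v, f β ∂μ ≤ ∫ β in w, f β ∂μ :=
    fun hvw hwu => setIntegral_mono_set (hfu.mono_set hwu)
      (ae_restrict_of_ae_restrict_of_subset hwu hf0u) hvw.eventuallyLE
  have hshell : (∫ β in u, f β ∂μ) - ∫ β in t, f β ∂μ ≤ L * μ.real (u \ t) := by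
    rw [← setIntegral_sdiff ht hfu (ht₁.trans h₁u)]
    refine (Real.le_norm_self _).trans (norm_setIntegral_le_of_norm_le_const
      ((measure_mono sdiff_subset).trans_lt hμu.lt_top) fun β hβ => ?_)
    rw [Real.norm_of_nonneg (hf0 β hβ.1)]
    exact hfL β hβ.1
  rw [abs_le]
  constructor <;> linarith [hmono ht₁ h₁u, hmono h₁u le_rfl, hmono ht₂ h₂u, hmono h₂u le_rfl]

end Sandwich

lemma abs_div_sub_div_le {p p' a a' c L : ℝ} (ha : 0 < a) (hc : 0 < c) (hca' : c ≤ a')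
    (hp : |p| ≤ L * a) :
    |p' / a' - p / a| ≤ (|p' - p| + L * |a - a'|) / c := by
  have ha' : 0 < a' := hc.trans_le hca'
  have hpa : |p / a| ≤ L := by rwa [abs_div, abs_of_pos ha, div_le_iff₀ ha]
  have hL : 0 ≤ L := (abs_nonneg _).trans hpa
  have hsplit : p' / a' - p / a = ((p' - p) + p / a * (a - a')) / a' := by
    field_simp
    ring
  rw [hsplit, abs_div, abs_of_pos ha']
  calc |(p' - p) + p / a * (a - a')| / a' ≤ (|p' - p| + L * |a - a'|) / a' := by
        gcongr
        refine (abs_add_le _ _).trans (add_le_add_right ?_ _)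
        rw [abs_mul]
        gcongr
    _ ≤ (|p' - p| + L * |a - a'|) / c := by gcongr

lemma integrableOn_of_subset_Icc {f : ℝ → ℝ} {a b L : ℝ} {s : Set ℝ} (hf : Measurable f)
    (hfL : ∀ β ∈ Icc a b, f β ∈ Icc 0 L) (hs : s ⊆ Icc a b) : IntegrableOn f s :=
  (IntegrableOn.of_bound measure_Icc_lt_top hf.aestronglyMeasurable L
    (ae_restrict_of_forall_mem measurableSet_Icc fun β hβ => by
      rw [Real.norm_of_nonneg (hfL β hβ).1]
      exact (hfL β hβ).2)).mono_set hs

lemma Uop_eq_div {x : ℝ → ℝ} {α : ℝ} (h : volume (confidenceSet x (x α) 1) ≠ 0) :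
    Uop x α = (∫ β in confidenceSet x (x α) 1, x β) / volume.real (confidenceSet x (x α) 1) :=
  if_neg h

section Perturbation

variable {x y : ℝ → ℝ} {L M δ α : ℝ}

lemma confidenceSet_sandwich_of_abs_sub_le (hα : α ∈ Icc (0 : ℝ) 1)
    (hxy : ∀ β ∈ Icc (0 : ℝ) 1, |y β - x β| ≤ δ) (r : ℝ) :
    confidenceSet x (x α) (r - 2 * δ) ⊆ confidenceSet y (y α) r ∧
      confidenceSet y (y α) r ⊆ confidenceSet x (x α) (r + 2 * δ) := by
  have hyx : ∀ β ∈ Icc (0 : ℝ) 1, |x β - y β| ≤ δ := fun β hβ => by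
    rw [abs_sub_comm]
    exact hxy β hβ
  exact ⟨confidenceSet_subset_of_abs_sub_le (hxy α hα) hxy (by linarith),
    confidenceSet_subset_of_abs_sub_le (hyx α hα) hyx le_rfl⟩

lemma abs_measureReal_confidenceSet_sub_le (hx : Measurable x) (hα : α ∈ Icc (0 : ℝ) 1)
    (hxy : ∀ β ∈ Icc (0 : ℝ) 1, |y β - x β| ≤ δ)
    (hM : ∀ a b, a ≤ b → volume.real {β ∈ Icc (0 : ℝ) 1 | x β ∈ Icc a b} ≤ M * (b - a)) :
    |volume.real (confidenceSet x (x α) 1) - volume.real (confidenceSet y (y α) 1)| ≤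
      4 * M * (2 * δ) := by
  have hδ : 0 ≤ δ := (abs_nonneg _).trans (hxy α hα)
  obtain ⟨hinner, houter⟩ := confidenceSet_sandwich_of_abs_sub_le hα hxy 1
  exact (abs_measureReal_sub_measureReal_le_of_subset (measurableSet_confidenceSet hx)
    volume_confidenceSet_ne_top (confidenceSet_mono (by linarith))
    (confidenceSet_mono (by linarith)) hinner houter).trans
    (measureReal_confidenceSet_sdiff_le hM (by positivity))

lemma abs_setIntegral_confidenceSet_sub_le (hx : Measurable x) (hy : Measurable y)
    (hxL : ∀ β ∈ Icc (0 : ℝ) 1, x β ∈ Icc 0 L) (hyL : ∀ β ∈ Icc (0 : ℝ) 1, y β ∈ Icc 0 L)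
    (hα : α ∈ Icc (0 : ℝ) 1) (hxy : ∀ β ∈ Icc (0 : ℝ) 1, |y β - x β| ≤ δ)
    (hM : ∀ a b, a ≤ b → volume.real {β ∈ Icc (0 : ℝ) 1 | x β ∈ Icc a b} ≤ M * (b - a)) :
    |(∫ β in confidenceSet y (y α) 1, y β) - ∫ β in confidenceSet x (x α) 1, x β| ≤
      δ + L * (4 * M * (2 * δ)) := by
  set Sy := confidenceSet y (y α) 1
  have hδ : 0 ≤ δ := (abs_nonneg _).trans (hxy α hα)
  have hL : 0 ≤ L := nonempty_Icc.1 ⟨_, hxL α hα⟩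
  obtain ⟨hinner, houter⟩ := confidenceSet_sandwich_of_abs_sub_le hα hxy 1
  have hyx : |(∫ β in Sy, y β) - ∫ β in Sy, x β| ≤ δ := by
    rw [← integral_sub (integrableOn_of_subset_Icc hy hyL confidenceSet_subset_Icc)
      (integrableOn_of_subset_Icc hx hxL confidenceSet_subset_Icc), ← Real.norm_eq_abs]
    calc _ ≤ δ * volume.real Sy := norm_setIntegral_le_of_norm_le_const
          volume_confidenceSet_ne_top.lt_top fun β hβ => hxy β hβ.1
      _ ≤ δ * volume.real (Icc (0 : ℝ) 1) := by
          gcongr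
          exacts [measure_Icc_lt_top.ne, confidenceSet_subset_Icc]
      _ = δ := by rw [Real.volume_real_Icc_of_le zero_le_one, sub_zero, mul_one]
  have hxx : |(∫ β in Sy, x β) - ∫ β in confidenceSet x (x α) 1, x β| ≤
      L * volume.real (confidenceSet x (x α) (1 + 2 * δ) \ confidenceSet x (x α) (1 - 2 * δ)) :=
    abs_setIntegral_sub_setIntegral_le_of_subset (measurableSet_confidenceSet hx)
      (measurableSet_confidenceSet hx) volume_confidenceSet_ne_top
      (integrableOn_of_subset_Icc hx hxL confidenceSet_subset_Icc)
      (fun β hβ => (hxL β hβ.1).1) (fun β hβ => (hxL β hβ.1).2) hinner houter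
      (confidenceSet_mono (by linarith)) (confidenceSet_mono (by linarith))
  calc _ ≤ |(∫ β in Sy, y β) - ∫ β in Sy, x β| +
        |(∫ β in Sy, x β) - ∫ β in confidenceSet x (x α) 1, x β| := abs_sub_le _ _ _
    _ ≤ δ + L * (4 * M * (2 * δ)) := add_le_add hyx <| hxx.trans <|
        mul_le_mul_of_nonneg_left (measureReal_confidenceSet_sdiff_le hM (by positivity)) hL

lemma abs_Uop_sub_Uop_le {c : ℝ} (hx : Measurable x) (hy : Measurable y)
    (hxL : ∀ β ∈ Icc (0 : ℝ) 1, x β ∈ Icc 0 L) (hyL : ∀ β ∈ Icc (0 : ℝ) 1, y β ∈ Icc 0 L)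
    (hα : α ∈ Icc (0 : ℝ) 1) (hxy : ∀ β ∈ Icc (0 : ℝ) 1, |y β - x β| ≤ δ)
    (hM : ∀ a b, a ≤ b → volume.real {β ∈ Icc (0 : ℝ) 1 | x β ∈ Icc a b} ≤ M * (b - a))
    (hc : 0 < c) (hcα : c ≤ volume.real (confidenceSet x (x α) (1 - 2 * δ))) :
    |Uop y α - Uop x α| ≤ (1 + 16 * L * M) * δ / c := by
  have hδ : 0 ≤ δ := (abs_nonneg _).trans (hxy α hα)
  have hL : 0 ≤ L := nonempty_Icc.1 ⟨_, hxL α hα⟩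
  have hSx : 0 < volume.real (confidenceSet x (x α) 1) := hc.trans_le <| hcα.trans <|
    measureReal_mono (confidenceSet_mono (by linarith)) volume_confidenceSet_ne_top
  have hSy : c ≤ volume.real (confidenceSet y (y α) 1) := hcα.trans <|
    measureReal_mono (confidenceSet_sandwich_of_abs_sub_le hα hxy 1).1 volume_confidenceSet_ne_top
  have hmean : |∫ β in confidenceSet x (x α) 1, x β| ≤
      L * volume.real (confidenceSet x (x α) 1) :=
    norm_setIntegral_le_of_norm_le_const volume_confidenceSet_ne_top.lt_top fun β hβ => by
      rw [Real.norm_of_nonneg (hxL β hβ.1).1]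
      exact (hxL β hβ.1).2
  rw [Uop_eq_div ((measureReal_ne_zero_iff volume_confidenceSet_ne_top).1 (hc.trans_le hSy).ne'),
    Uop_eq_div ((measureReal_ne_zero_iff volume_confidenceSet_ne_top).1 hSx.ne')]
  calc _ ≤ _ := abs_div_sub_div_le hSx hc hSy hmean
    _ ≤ (δ + L * (4 * M * (2 * δ)) + L * (4 * M * (2 * δ))) / c := by
        gcongr
        exacts [abs_setIntegral_confidenceSet_sub_le hx hy hxL hyL hα hxy hM,
          abs_measureReal_confidenceSet_sub_le hx hα hxy hM]
    _ = (1 + 16 * L * M) * δ / c := by ring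

end Perturbation

theorem update_continuous_at_regular_general (L : ℝ) (x : ℝ → ℝ)
    (hx : Measurable x)
    (hxrange : ∀ α ∈ Set.Icc (0 : ℝ) 1, x α ∈ Set.Icc (0 : ℝ) L)
    (hreg : RegularOpinion x) :
    ∀ ε > (0 : ℝ), ∃ δ > (0 : ℝ), ∀ y : ℝ → ℝ, Measurable y →
      (∀ α ∈ Set.Icc (0 : ℝ) 1, y α ∈ Set.Icc (0 : ℝ) L) →
      (∀ α ∈ Set.Icc (0 : ℝ) 1, |y α - x α| ≤ δ) →
      ∀ α ∈ Set.Icc (0 : ℝ) 1, |Uop y α - Uop x α| ≤ ε := by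
  have hlo : BddBelow (x '' Icc 0 1) := ⟨0, by rintro _ ⟨β, hβ, rfl⟩; exact (hxrange β hβ).1⟩
  have hhi : BddAbove (x '' Icc 0 1) := ⟨L, by rintro _ ⟨β, hβ, rfl⟩; exact (hxrange β hβ).2⟩
  have hL : 0 ≤ L := nonempty_Icc.1 ⟨_, hxrange 0 (left_mem_Icc.2 zero_le_one)⟩
  obtain ⟨M, hM0, hM⟩ := hreg.exists_measureReal_le hlo hhi
  obtain ⟨c, hc, hcα⟩ := hreg.exists_pos_le_measureReal_confidenceSet hlo hhi one_half_pos
  intro ε hε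
  set K := 1 + 16 * L * M
  have hK : 0 < K := by positivity
  refine ⟨min (1 / 4) (ε * c / K), by positivity, fun y hy hyL hxy α hα => ?_⟩
  have hδ : min (1 / 4) (ε * c / K) ≤ 1 / 4 := min_le_left _ _
  calc |Uop y α - Uop x α| ≤ K * min (1 / 4) (ε * c / K) / c :=
        abs_Uop_sub_Uop_le hx hy hxrange hyL hα hxy hM hc
          ((hcα α hα).trans (measureReal_mono (confidenceSet_mono (by linarith))
            volume_confidenceSet_ne_top))
    _ ≤ K * (ε * c / K) / c := by gcongr; exact min_le_right _ _
    _ = ε := by field_simp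

/-- The update operator `U` of the continuous-agent Krause model
is continuous, with respect to the supremum norm on `[0,1]`, at every regular
`x ∈ X_L`. -/
theorem update_continuous_at_regular (L : ℝ) (hL : 0 < L) (x : ℝ → ℝ)
    (hx : Measurable x)
    (hxrange : ∀ α ∈ Set.Icc (0 : ℝ) 1, x α ∈ Set.Icc (0 : ℝ) L)
    (hreg : RegularOpinion x) :
    ∀ ε > (0 : ℝ), ∃ δ > (0 : ℝ), ∀ y : ℝ → ℝ, Measurable y →
      (∀ α ∈ Set.Icc (0 : ℝ) 1, y α ∈ Set.Icc (0 : ℝ) L) →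
      (∀ α ∈ Set.Icc (0 : ℝ) 1, |y α - x α| ≤ δ) →
      ∀ α ∈ Set.Icc (0 : ℝ) 1, |Uop y α - Uop x α| ≤ ε :=
  update_continuous_at_regular_general L x hx hxrange hreg
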